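/- arXiv:2602.11770 — 3 statements merged into one kernel-verified Lean document; each statement's English description precedes it below -/
import Mathlib

section
/- Let θ_N ≥ 1, θ_T ≥ 1, κ_n ∈ (0,1/2), κ_t ∈ (0,1/2], ξ ∈ (0,1], β > 0, ρ > 0, and set κ_tan = (θ_T²/2)(L_L + ρ·L_c) + β·θ_N·θ_T·(L_L + κ_J·L_λ + ρ·L_J) + β·θ_T·L_λ/ξ + θ_T²·L_c·L_λ. Suppose x ∈ O, α > 0, ω_T ≥ 0, ω_N ≥ 0 with ξ‖c(x)‖ ≤ ω_N ≤ β·α·ω_T; s_N ∈ ℝⁿ satisfies x + s_N ∈ O and either s_N = 0 or (‖s_N‖ ≤ θ_N·ω_N and (1/2)‖c(x+s_N)‖² ≤ (1/2)‖c(x)‖² − κ_n·ω_N²); and s_T ∈ ℝⁿ satisfies x + s_N + s_T ∈ O, J(x)s_T = 0, ⟨g(x), s_T⟩ ≤ −κ_t·α·ω_T², and ‖s_T‖ ≤ θ_T·α·ω_T. Then ψ(x + s_N + s_T) − ψ(x + s_N) ≤ −κ_t·α·ω_T² + κ_tan·α²·ω_T². -/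
/-!
Write `y = x + s_N`, `z = y + s_T` and freeze the multiplier at `λ = λ̂(y)`:
`ψ(z) - ψ(y) = [L(z, λ) - L(y, λ)] + ⟨λ̂(z) - λ̂(y), c(z)⟩ + ρ (‖c(z)‖ - ‖c(y)‖)`.
The first term is controlled by the descent lemma for the `L_L`-Lipschitz gradient of `L(·, λ)`,
and since `J(x) s_T = 0` the slope `⟨∇ₓL(y, λ), s_T⟩` is within `L_L ‖s_N‖ ‖s_T‖` of `⟨g(x), s_T⟩`.
The second term is controlled by the Lipschitz continuity of `λ̂` and `c`, the third by the
Taylor bound at `y` together with `J(y) s_T = (J(y) - J(x)) s_T`. Finally `‖s_N‖ ≤ θ_N β α ω_T`,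
`‖s_T‖ ≤ θ_T α ω_T` and `ξ ‖c(y)‖ ≤ ξ ‖c(x)‖ ≤ β α ω_T` turn every error term into a multiple
of `α² ω_T²`.
-/

open scoped RealInnerProductSpace

section

variable {E F : Type*} [NormedAddCommGroup E] [InnerProductSpace ℝ E]
  [NormedAddCommGroup F] [InnerProductSpace ℝ F]

theorem norm_add_le_of_apply_eq_zero (c : E → F) {A B : E →L[ℝ] F} {y s : E} (hB : B s = 0) :
    ‖c (y + s)‖ ≤ ‖c y‖ + ‖c (y + s) - c y - A s‖ + ‖A - B‖ * ‖s‖ := by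
  have hAs : A s = (A - B) s := by rw [sub_apply, hB, sub_zero]
  calc ‖c (y + s)‖ = ‖c y + (c (y + s) - c y - A s) + (A - B) s‖ := by
        rw [← hAs]; abel_nf
    _ ≤ ‖c y‖ + ‖c (y + s) - c y - A s‖ + ‖(A - B) s‖ := norm_add₃_le
    _ ≤ ‖c y‖ + ‖c (y + s) - c y - A s‖ + ‖A - B‖ * ‖s‖ := by gcongr; exact (A - B).le_opNorm s

variable [CompleteSpace E]

theorem Convex.sub_le_inner_add_of_gradient_lipschitz {s : Set E} (hs : Convex ℝ s)
    {φ : E → ℝ} {G : E → E} {L : ℝ} {y z : E} (hy : y ∈ s) (hz : z ∈ s)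
    (hφ : ∀ w ∈ s, HasGradientAt φ (G w) w) (hG : ∀ w ∈ s, ‖G w - G y‖ ≤ L * ‖w - y‖) :
    φ z - φ y ≤ ⟪G y, z - y⟫ + L / 2 * ‖z - y‖ ^ 2 := by
  set d := z - y
  have hd : y + d = z := add_sub_cancel y z
  have hseg : ∀ t ∈ Set.Icc (0 : ℝ) 1, y + t • d ∈ s := fun t ht => hs.add_smul_sub_mem hy hz ht
  let h : ℝ → ℝ := fun t => φ (y + t • d) - (t * ⟪G y, d⟫ + L / 2 * t ^ 2 * ‖d‖ ^ 2)
  have hderiv : ∀ t ∈ Set.Icc (0 : ℝ) 1,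
      HasDerivAt h (⟪G (y + t • d) - G y, d⟫ - L * t * ‖d‖ ^ 2) t := by
    intro t ht
    have hline : HasDerivAt (fun t : ℝ => y + t • d) d t := by
      simpa using ((hasDerivAt_id t).smul_const d).const_add y
    have hφt := (hφ _ (hseg t ht)).hasFDerivAt.comp_hasDerivAt t hline
    have hquad := ((hasDerivAt_id t).mul_const ⟪G y, d⟫).add
      (((hasDerivAt_pow 2 t).const_mul (L / 2)).mul_const (‖d‖ ^ 2))
    refine (hφt.sub hquad).congr_deriv ?_
    simp only [InnerProductSpace.toDual_apply_apply, inner_sub_left]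
    ring
  have hanti : AntitoneOn h (Set.Icc 0 1) := by
    refine antitoneOn_of_hasDerivWithinAt_nonpos (convex_Icc 0 1)
      (fun t ht => (hderiv t ht).continuousAt.continuousWithinAt)
      (fun t ht => (hderiv t (interior_subset ht)).hasDerivWithinAt) fun t ht => ?_
    rw [interior_Icc] at ht
    have ht' : t ∈ Set.Icc (0 : ℝ) 1 := Set.Ioo_subset_Icc_self ht
    calc ⟪G (y + t • d) - G y, d⟫ - L * t * ‖d‖ ^ 2
        ≤ L * ‖y + t • d - y‖ * ‖d‖ - L * t * ‖d‖ ^ 2 := by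
          gcongr
          exact (real_inner_le_norm _ _).trans
            (mul_le_mul_of_nonneg_right (hG _ (hseg t ht')) (norm_nonneg d))
      _ = 0 := by
          rw [add_sub_cancel_left, norm_smul, Real.norm_of_nonneg ht.1.le]; ring
  have h01 := hanti (Set.left_mem_Icc.2 zero_le_one) (Set.right_mem_Icc.2 zero_le_one) zero_le_one
  simp only [h, zero_smul, add_zero, one_smul, hd, zero_mul, sub_zero, one_mul, one_pow,
    ne_eq, OfNat.ofNat_ne_zero, not_false_eq_true, zero_pow, mul_zero] at h01
  linarith

variable [CompleteSpace F]

theorem HasGradientAt.add_inner_comp {f : E → ℝ} {c : E → F} {a : E} {A : E →L[ℝ] F} {x : E}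
    (hf : HasGradientAt f a x) (hc : HasFDerivAt c A x) (μ : F) :
    HasGradientAt (fun w => f w + ⟪μ, c w⟫) (a + ContinuousLinearMap.adjoint A μ) x := by
  have hL : HasFDerivAt (fun w => f w + ⟪μ, c w⟫)
      (InnerProductSpace.toDual ℝ E a + (innerSL ℝ μ).comp A) x :=
    hf.hasFDerivAt.add ((innerSL ℝ μ).hasFDerivAt.comp x hc)
  refine hL.congr_fderiv ?_
  ext v
  simp [ContinuousLinearMap.adjoint_inner_left]

theorem Convex.lagrangian_sub_le_of_apply_eq_zero {s : Set E} (hs : Convex ℝ s)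
    {f : E → ℝ} {c : E → F} {g : E → E} {J : E → E →L[ℝ] F} {μ : F} {L : ℝ} {x y z : E}
    (hf : ∀ w ∈ s, HasGradientAt f (g w) w) (hc : ∀ w ∈ s, HasFDerivAt c (J w) w)
    (hLip : ∀ w ∈ s, ∀ v ∈ s, ‖(g w + ContinuousLinearMap.adjoint (J w) μ)
      - (g v + ContinuousLinearMap.adjoint (J v) μ)‖ ≤ L * ‖w - v‖)
    (hx : x ∈ s) (hy : y ∈ s) (hz : z ∈ s) (hJ : J x (z - y) = 0) :
    f z + ⟪μ, c z⟫ - (f y + ⟪μ, c y⟫)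
      ≤ ⟪g x, z - y⟫ + L * ‖y - x‖ * ‖z - y‖ + L / 2 * ‖z - y‖ ^ 2 := by
  set G : E → E := fun w => g w + ContinuousLinearMap.adjoint (J w) μ
  have hGx : ⟪G x, z - y⟫ = ⟪g x, z - y⟫ := by
    rw [inner_add_left, ContinuousLinearMap.adjoint_inner_left, hJ, inner_zero_right, add_zero]
  have hGy : ⟪G y, z - y⟫ ≤ ⟪g x, z - y⟫ + L * ‖y - x‖ * ‖z - y‖ := by
    rw [← hGx, ← sub_le_iff_le_add', ← inner_sub_left]
    exact (real_inner_le_norm _ _).trans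
      (mul_le_mul_of_nonneg_right (hLip y hy x hx) (norm_nonneg _))
  have hdescent := hs.sub_le_inner_add_of_gradient_lipschitz hy hz
    (fun w hw => (hf w hw).add_inner_comp (hc w hw) μ) fun w hw => hLip w hw y hy
  linarith

def lyapunov (f : E → ℝ) (c : E → F) (lamhat : E → F) (ρ : ℝ) (x : E) : ℝ :=
  f x + ⟪lamhat x, c x⟫ + ρ * ‖c x‖

theorem Convex.lyapunov_sub_le {s : Set E} (hs : Convex ℝ s)
    {f : E → ℝ} {c : E → F} {g : E → E} {J : E → E →L[ℝ] F} {lamhat : E → F}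
    {ρ LL Llam Lc LJ : ℝ} {x y z : E} (hρ : 0 ≤ ρ)
    (hf : ∀ w ∈ s, HasGradientAt f (g w) w) (hc : ∀ w ∈ s, HasFDerivAt c (J w) w)
    (hLip : ∀ w ∈ s, ∀ v ∈ s, ‖(g w + ContinuousLinearMap.adjoint (J w) (lamhat y))
      - (g v + ContinuousLinearMap.adjoint (J v) (lamhat y))‖ ≤ LL * ‖w - v‖)
    (hlamhat : ‖lamhat z - lamhat y‖ ≤ Llam * ‖z - y‖) (hc_lip : ‖c z - c y‖ ≤ Lc * ‖z - y‖)
    (hJ_lip : ‖J y - J x‖ ≤ LJ * ‖y - x‖)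
    (hTaylor : ‖c z - c y - J y (z - y)‖ ≤ Lc / 2 * ‖z - y‖ ^ 2)
    (hx : x ∈ s) (hy : y ∈ s) (hz : z ∈ s) (hJ : J x (z - y) = 0) :
    lyapunov f c lamhat ρ z - lyapunov f c lamhat ρ y
      ≤ ⟪g x, z - y⟫ + LL * ‖y - x‖ * ‖z - y‖ + LL / 2 * ‖z - y‖ ^ 2
        + Llam * ‖z - y‖ * (‖c y‖ + Lc * ‖z - y‖)
        + ρ * (Lc / 2 * ‖z - y‖ ^ 2 + LJ * ‖y - x‖ * ‖z - y‖) := by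
  have hlag := hs.lagrangian_sub_le_of_apply_eq_zero hf hc hLip hx hy hz hJ
  have hcz : ‖c z‖ ≤ ‖c y‖ + Lc * ‖z - y‖ :=
    (norm_le_norm_add_norm_sub' (c z) (c y)).trans (by gcongr)
  have hmult : ⟪lamhat z - lamhat y, c z⟫ ≤ Llam * ‖z - y‖ * (‖c y‖ + Lc * ‖z - y‖) :=
    (real_inner_le_norm _ _).trans
      (mul_le_mul hlamhat hcz (norm_nonneg _) ((norm_nonneg _).trans hlamhat))
  have hnorm : ‖c z‖ - ‖c y‖ ≤ Lc / 2 * ‖z - y‖ ^ 2 + LJ * ‖y - x‖ * ‖z - y‖ := by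
    have htri := norm_add_le_of_apply_eq_zero c (A := J y) (y := y) hJ
    rw [add_sub_cancel] at htri
    linarith [mul_le_mul_of_nonneg_right hJ_lip (norm_nonneg (z - y))]
  rw [inner_sub_left] at hmult
  unfold lyapunov
  linarith [mul_le_mul_of_nonneg_left hnorm hρ]

end

theorem tangential_error_le {LL Llam Lc LJ κJ ρ θN θT β ξ a N T C : ℝ}
    (hLL : 0 ≤ LL) (hLlam : 0 ≤ Llam) (hLc : 0 ≤ Lc) (hLJ : 0 ≤ LJ) (hκJ : 0 ≤ κJ) (hρ : 0 ≤ ρ)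
    (hθN : 0 ≤ θN) (hθT : 0 ≤ θT) (hβ : 0 ≤ β) (hξ : 0 < ξ) (ha : 0 ≤ a)
    (hT0 : 0 ≤ T) (hC0 : 0 ≤ C)
    (hN : N ≤ θN * β * a) (hT : T ≤ θT * a) (hC : ξ * C ≤ β * a) :
    LL * N * T + LL / 2 * T ^ 2 + Llam * T * (C + Lc * T) + ρ * (Lc / 2 * T ^ 2 + LJ * N * T)
      ≤ ((θT ^ 2 / 2) * (LL + ρ * Lc) + β * θN * θT * (LL + κJ * Llam + ρ * LJ)
        + β * θT * Llam / ξ + θT ^ 2 * Lc * Llam) * a ^ 2 := by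
  have hT2 : T ^ 2 ≤ θT ^ 2 * a ^ 2 := by rw [← mul_pow]; gcongr
  have hNT : N * T ≤ β * θN * θT * a ^ 2 :=
    calc N * T ≤ θN * β * a * (θT * a) := mul_le_mul hN hT hT0 (by positivity)
      _ = β * θN * θT * a ^ 2 := by ring
  have hTC : T * C ≤ β * θT / ξ * a ^ 2 := by
    have hC' : C ≤ β * a / ξ := by rwa [le_div_iff₀ hξ, mul_comm]
    calc T * C ≤ θT * a * (β * a / ξ) := mul_le_mul hT hC' hC0 (by positivity)
      _ = β * θT / ξ * a ^ 2 := by ring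
  have hslack : 0 ≤ β * θN * θT * κJ * Llam * a ^ 2 := by positivity
  linear_combination (LL / 2 + ρ * Lc / 2 + Llam * Lc) * hT2 + (LL + ρ * LJ) * hNT
    + Llam * hTC + hslack

theorem convex_setOf_forall_nonneg (ι : Type*) :
    Convex ℝ {x : EuclideanSpace ℝ ι | ∀ i, 0 ≤ x i} := by
  intro x hx y hy a b ha hb _ i
  simpa using add_nonneg (mul_nonneg ha (hx i)) (mul_nonneg hb (hy i))

theorem stmt10_general {n m : ℕ}
    (f : EuclideanSpace ℝ (Fin n) → ℝ)
    (c : EuclideanSpace ℝ (Fin n) → EuclideanSpace ℝ (Fin m))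
    (g : EuclideanSpace ℝ (Fin n) → EuclideanSpace ℝ (Fin n))
    (J : EuclideanSpace ℝ (Fin n) → (EuclideanSpace ℝ (Fin n) →L[ℝ] EuclideanSpace ℝ (Fin m)))
    -- `O` is the nonnegative orthant
    (O : Set (EuclideanSpace ℝ (Fin n))) (hO : O = {x | ∀ i, 0 ≤ x i})
    -- `f` and `c` are continuously differentiable on an open set `U ⊇ O`,
    -- with gradient `g x` and derivative `J x`
    (U : Set (EuclideanSpace ℝ (Fin n))) (hOU : O ⊆ U)
    (hf : ∀ x ∈ U, HasGradientAt f (g x) x)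
    (hcder : ∀ x ∈ U, HasFDerivAt c (J x) x)
    -- least-squares multiplier
    (lamhat : EuclideanSpace ℝ (Fin n) → EuclideanSpace ℝ (Fin m))
    (κlam κJ Lc Llam LL LJ : ℝ)
    (hκJ : 0 < κJ)
    (hLc : 0 < Lc) (hLlam : 0 < Llam) (hLL : 0 < LL) (hLJ : 0 < LJ)
    (hcL : ∀ x ∈ O, ∀ y ∈ O, ‖c x - c y‖ ≤ Lc * ‖x - y‖)
    (hlb : ∀ x ∈ O, ‖lamhat x‖ ≤ κlam)
    (hlL : ∀ x ∈ O, ∀ y ∈ O, ‖lamhat x - lamhat y‖ ≤ Llam * ‖x - y‖)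
    (hLLip : ∀ lam : EuclideanSpace ℝ (Fin m), ‖lam‖ ≤ κlam →
      ∀ x ∈ O, ∀ y ∈ O,
        ‖(g x + (ContinuousLinearMap.adjoint (J x)) lam)
          - (g y + (ContinuousLinearMap.adjoint (J y)) lam)‖ ≤ LL * ‖x - y‖)
    (hJL : ∀ x ∈ O, ∀ y ∈ O, ‖J x - J y‖ ≤ LJ * ‖x - y‖)
    -- Taylor bound for `c`
    (hTaylor : ∀ x ∈ O, ∀ y ∈ O,
      ‖c y - c x - (J x) (y - x)‖ ≤ (Lc / 2) * ‖y - x‖ ^ 2)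
    (θN θT κn κt ξ β ρ κtan : ℝ)
    (hθN : 1 ≤ θN) (hθT : 1 ≤ θT) (hκn1 : 0 < κn)
    (hξ1 : 0 < ξ)
    (hβ : 0 < β) (hρ : 0 < ρ)
    (hκtan : κtan = (θT ^ 2 / 2) * (LL + ρ * Lc)
      + β * θN * θT * (LL + κJ * Llam + ρ * LJ)
      + β * θT * Llam / ξ + θT ^ 2 * Lc * Llam)
    (x : EuclideanSpace ℝ (Fin n)) (hx : x ∈ O)
    (α ωT ωN : ℝ) (hα : 0 < α) (hωT : 0 ≤ ωT)
    (hωN1 : ξ * ‖c x‖ ≤ ωN) (hωN2 : ωN ≤ β * α * ωT)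
    (sN : EuclideanSpace ℝ (Fin n)) (hsNO : x + sN ∈ O)
    (hsN : sN = 0 ∨
      (‖sN‖ ≤ θN * ωN ∧
        (1/2) * ‖c (x + sN)‖ ^ 2 ≤ (1/2) * ‖c x‖ ^ 2 - κn * ωN ^ 2))
    (sT : EuclideanSpace ℝ (Fin n)) (hsTO : x + sN + sT ∈ O)
    (hsT1 : (J x) sT = 0)
    (hsT2 : ⟪g x, sT⟫ ≤ -(κt * α * ωT ^ 2))
    (hsT3 : ‖sT‖ ≤ θT * α * ωT) :
    (f (x + sN + sT) + ⟪lamhat (x + sN + sT), c (x + sN + sT)⟫ + ρ * ‖c (x + sN + sT)‖)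
      - (f (x + sN) + ⟪lamhat (x + sN), c (x + sN)⟫ + ρ * ‖c (x + sN)‖)
      ≤ -(κt * α * ωT ^ 2) + κtan * α ^ 2 * ωT ^ 2 := by
  have hOconv : Convex ℝ O := hO ▸ convex_setOf_forall_nonneg (Fin n)
  have ha : 0 ≤ α * ωT := mul_nonneg hα.le hωT
  obtain ⟨hsN_le, hcy_le⟩ : ‖sN‖ ≤ θN * β * (α * ωT) ∧ ‖c (x + sN)‖ ≤ ‖c x‖ := by
    rcases hsN with rfl | ⟨hsN_le, hdecrease⟩
    · exact ⟨norm_zero.trans_le (by positivity), by rw [add_zero]⟩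
    · refine ⟨hsN_le.trans ((mul_le_mul_of_nonneg_left hωN2 (by linarith)).trans_eq (by ring)),
        (pow_le_pow_iff_left₀ (norm_nonneg _) (norm_nonneg _) two_ne_zero).1 ?_⟩
      linarith [mul_nonneg hκn1.le (sq_nonneg ωN)]
  have hstep := hOconv.lyapunov_sub_le (lamhat := lamhat) hρ.le
    (fun w hw => hf w (hOU hw)) (fun w hw => hcder w (hOU hw))
    (hLLip _ (hlb _ hsNO)) (hlL _ hsTO _ hsNO) (hcL _ hsTO _ hsNO) (hJL _ hsNO _ hx)
    (hTaylor _ hsNO _ hsTO) hx hsNO hsTO (by rwa [add_sub_cancel_left])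
  simp only [add_sub_cancel_left] at hstep
  have herror := tangential_error_le (θT := θT) hLL.le hLlam.le hLc.le hLJ.le hκJ.le hρ.le
    (by linarith) (by linarith) hβ.le hξ1 ha (norm_nonneg sT) (norm_nonneg (c (x + sN)))
    hsN_le (by linarith) ((mul_le_mul_of_nonneg_left hcy_le hξ1.le).trans
      (hωN1.trans (hωN2.trans_eq (by ring))))
  rw [hκtan]
  change lyapunov f c lamhat ρ _ - lyapunov f c lamhat ρ _ ≤ _
  linarith

theorem stmt10 {n m : ℕ}
    (f : EuclideanSpace ℝ (Fin n) → ℝ)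
    (c : EuclideanSpace ℝ (Fin n) → EuclideanSpace ℝ (Fin m))
    (g : EuclideanSpace ℝ (Fin n) → EuclideanSpace ℝ (Fin n))
    (J : EuclideanSpace ℝ (Fin n) → (EuclideanSpace ℝ (Fin n) →L[ℝ] EuclideanSpace ℝ (Fin m)))
    -- `O` is the nonnegative orthant
    (O : Set (EuclideanSpace ℝ (Fin n))) (hO : O = {x | ∀ i, 0 ≤ x i})
    -- `f` and `c` are continuously differentiable on an open set `U ⊇ O`,
    -- with gradient `g x` and derivative `J x`
    (U : Set (EuclideanSpace ℝ (Fin n))) (hU : IsOpen U) (hOU : O ⊆ U)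
    (hf : ∀ x ∈ U, HasGradientAt f (g x) x) (hgcont : ContinuousOn g U)
    (hcder : ∀ x ∈ U, HasFDerivAt c (J x) x) (hJcont : ContinuousOn J U)
    -- least-squares multiplier
    (lamhat : EuclideanSpace ℝ (Fin n) → EuclideanSpace ℝ (Fin m))
    (hlam : ∀ x ∈ O,
      (J x) ((ContinuousLinearMap.adjoint (J x)) (lamhat x)) = -((J x) (g x)))
    (κg κc κlam κJ Lc Llam LL LJ : ℝ)
    (hκg : 0 < κg) (hκc : 0 < κc) (hκlam : 0 < κlam) (hκJ : 0 < κJ)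
    (hLc : 0 < Lc) (hLlam : 0 < Llam) (hLL : 0 < LL) (hLJ : 0 < LJ)
    (hgb : ∀ x ∈ O, ‖g x‖ ≤ κg)
    (hcb : ∀ x ∈ O, ‖c x‖ ≤ κc)
    (hcL : ∀ x ∈ O, ∀ y ∈ O, ‖c x - c y‖ ≤ Lc * ‖x - y‖)
    (hlb : ∀ x ∈ O, ‖lamhat x‖ ≤ κlam)
    (hlL : ∀ x ∈ O, ∀ y ∈ O, ‖lamhat x - lamhat y‖ ≤ Llam * ‖x - y‖)
    (hLLip : ∀ lam : EuclideanSpace ℝ (Fin m), ‖lam‖ ≤ κlam →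
      ∀ x ∈ O, ∀ y ∈ O,
        ‖(g x + (ContinuousLinearMap.adjoint (J x)) lam)
          - (g y + (ContinuousLinearMap.adjoint (J y)) lam)‖ ≤ LL * ‖x - y‖)
    (hJb : ∀ x ∈ O, ‖J x‖ ≤ κJ)
    (hJL : ∀ x ∈ O, ∀ y ∈ O, ‖J x - J y‖ ≤ LJ * ‖x - y‖)
    -- Taylor bound for `c`
    (hTaylor : ∀ x ∈ O, ∀ y ∈ O,
      ‖c y - c x - (J x) (y - x)‖ ≤ (Lc / 2) * ‖y - x‖ ^ 2)
    (θN θT κn κt ξ β ρ κtan : ℝ)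
    (hθN : 1 ≤ θN) (hθT : 1 ≤ θT) (hκn1 : 0 < κn) (hκn2 : κn < 1/2)
    (hκt1 : 0 < κt) (hκt2 : κt ≤ 1/2) (hξ1 : 0 < ξ) (hξ2 : ξ ≤ 1)
    (hβ : 0 < β) (hρ : 0 < ρ)
    (hκtan : κtan = (θT ^ 2 / 2) * (LL + ρ * Lc)
      + β * θN * θT * (LL + κJ * Llam + ρ * LJ)
      + β * θT * Llam / ξ + θT ^ 2 * Lc * Llam)
    (x : EuclideanSpace ℝ (Fin n)) (hx : x ∈ O)
    (α ωT ωN : ℝ) (hα : 0 < α) (hωT : 0 ≤ ωT) (hωN : 0 ≤ ωN)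
    (hωN1 : ξ * ‖c x‖ ≤ ωN) (hωN2 : ωN ≤ β * α * ωT)
    (sN : EuclideanSpace ℝ (Fin n)) (hsNO : x + sN ∈ O)
    (hsN : sN = 0 ∨
      (‖sN‖ ≤ θN * ωN ∧
        (1/2) * ‖c (x + sN)‖ ^ 2 ≤ (1/2) * ‖c x‖ ^ 2 - κn * ωN ^ 2))
    (sT : EuclideanSpace ℝ (Fin n)) (hsTO : x + sN + sT ∈ O)
    (hsT1 : (J x) sT = 0)
    (hsT2 : ⟪g x, sT⟫ ≤ -(κt * α * ωT ^ 2))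
    (hsT3 : ‖sT‖ ≤ θT * α * ωT) :
    (f (x + sN + sT) + ⟪lamhat (x + sN + sT), c (x + sN + sT)⟫ + ρ * ‖c (x + sN + sT)‖)
      - (f (x + sN) + ⟪lamhat (x + sN), c (x + sN)⟫ + ρ * ‖c (x + sN)‖)
      ≤ -(κt * α * ωT ^ 2) + κtan * α ^ 2 * ωT ^ 2 :=
  stmt10_general f c g J O hO U hOU hf hcder lamhat κlam κJ Lc Llam LL LJ hκJ hLc hLlam hLL hLJ hcL
    hlb hlL hLLip hJL hTaylor θN θT κn κt ξ β ρ κtan hθN hθT hκn1 hξ1 hβ hρ hκtan x hx α ωT ωN hα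
    hωT hωN1 hωN2 sN hsNO hsN sT hsTO hsT1 hsT2 hsT3
end

section
/- For every k ∈ ℕ: √(1 + Γ(k+1)/ς) + Σ_{ν ≤ k, ν ∈ N} ω_N(ν) ≤ κ_gap + (κ_tan/(κ_t·√ς))·log(1 + Γ(k+1)/ς). -/
/-!
The quantity `Φ k = ψ k + η ∑_{ν < k, ν ∈ N} ω_N ν + κ_t η √(Γ k + ς) - κ_tan η² log (Γ k + ς)`
is nonincreasing. The passage `ψ ↦ ψ⁺` pays for the new summand `η ω_N k` when `k ∈ N`; off `T`
nothing else moves. On a tangential step with `A = Γ (k+1) + ς`, `B = Γ k + ς`, the stepsize is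
`α = η / √A`, so by concavity
`κ_t α ω_T² = κ_t η (A - B) / √A ≥ κ_t η (√A - √B)` and
`κ_tan α² ω_T² = κ_tan η² (A - B) / A ≤ κ_tan η² (log A - log B)`.
Comparing `Φ (k+1)` with `Φ 0`, bounding `ψ (k+1)` below by `ψ_low` and using `η κ_t √ς ≤ 1`
gives the estimate.
-/

open Real Finset

lemma sqrt_sub_sqrt_le_sub_div_sqrt {a b : ℝ} (hb : 0 ≤ b) (hab : b ≤ a) :
    √a - √b ≤ (a - b) / √a := by
  rcases hb.eq_or_lt with rfl | hb
  · simp [div_sqrt]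
  have ha : 0 < √a := sqrt_pos.mpr (hb.trans_le hab)
  rw [le_div_iff₀ ha, sub_mul, mul_self_sqrt (hb.le.trans hab), sub_le_sub_iff_left]
  calc b = √b * √b := (mul_self_sqrt hb.le).symm
    _ ≤ √b * √a := by gcongr

lemma sub_div_le_log_sub_log {a b : ℝ} (ha : 0 < a) (hb : 0 < b) :
    (a - b) / a ≤ log a - log b := by
  have h := one_sub_inv_le_log_of_pos (div_pos ha hb)
  rwa [inv_div, log_div ha.ne' hb.ne', one_sub_div ha.ne'] at h

lemma tangential_step_bound {B w η α κt κtan : ℝ} (hB : 0 < B) (hη : 0 ≤ η) (hκt : 0 ≤ κt)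
    (hκtan : 0 ≤ κtan) (hα : α = η / √(B + w ^ 2)) :
    κt * η * (√(B + w ^ 2) - √B) - κtan * η ^ 2 * (log (B + w ^ 2) - log B)
      ≤ κt * α * w ^ 2 - κtan * α ^ 2 * w ^ 2 := by
  have hA : 0 < B + w ^ 2 := by positivity
  have hsqrt := sqrt_sub_sqrt_le_sub_div_sqrt hB.le (le_add_of_nonneg_right (sq_nonneg w))
  have hlog := sub_div_le_log_sub_log hA hB
  rw [add_sub_cancel_left] at hsqrt hlog
  calc κt * η * (√(B + w ^ 2) - √B) - κtan * η ^ 2 * (log (B + w ^ 2) - log B)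
      ≤ κt * η * (w ^ 2 / √(B + w ^ 2)) - κtan * η ^ 2 * (w ^ 2 / (B + w ^ 2)) := by
        gcongr
    _ = κt * α * w ^ 2 - κtan * α ^ 2 * w ^ 2 := by
        rw [hα, div_pow, sq_sqrt hA.le]
        ring

section Potential

variable {η ς κt κtan : ℝ} {ωT ωN Γ α ψ ψp : ℕ → ℝ} {T N : Set ℕ} [DecidablePred (· ∈ N)]

lemma gamma_nonneg (hΓ0 : Γ 0 = 0) (hΓT : ∀ k ∈ T, Γ (k + 1) = Γ k + ωT k ^ 2)
    (hΓN : ∀ k, k ∉ T → Γ (k + 1) = Γ k) (k : ℕ) : 0 ≤ Γ k := by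
  induction k with
  | zero => exact hΓ0.ge
  | succ k ih =>
    by_cases hT : k ∈ T
    · rw [hΓT k hT]
      positivity
    · rwa [hΓN k hT]

variable (η ς κt κtan ωN Γ ψ N) in
noncomputable def potential (k : ℕ) : ℝ :=
  ψ k + η * ∑ ν ∈ (range k).filter (· ∈ N), ωN ν + κt * η * √(Γ k + ς)
    - κtan * η ^ 2 * log (Γ k + ς)

lemma potential_zero (hΓ0 : Γ 0 = 0) :
    potential η ς κt κtan ωN Γ ψ N 0 = ψ 0 + κt * η * √ς - κtan * η ^ 2 * log ς := by
  simp [potential, hΓ0]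

lemma potential_succ_le (hη : 0 ≤ η) (hς : 0 < ς) (hκt : 0 ≤ κt) (hκtan : 0 ≤ κtan)
    (hΓ : ∀ k, 0 ≤ Γ k)
    (hΓT : ∀ k ∈ T, Γ (k + 1) = Γ k + ωT k ^ 2)
    (hΓN : ∀ k, k ∉ T → Γ (k + 1) = Γ k)
    (hα : ∀ k, α k = η / √(Γ k + ωT k ^ 2 + ς))
    (hψN : ∀ k ∈ N, ψp k - ψ k ≤ -(η * ωN k))
    (hψN' : ∀ k, k ∉ N → ψp k = ψ k)
    (hψT : ∀ k ∈ T, ψ (k + 1) - ψp k ≤ -(κt * α k * ωT k ^ 2) + κtan * α k ^ 2 * ωT k ^ 2)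
    (hψT' : ∀ k, k ∉ T → ψ (k + 1) = ψp k) (k : ℕ) :
    potential η ς κt κtan ωN Γ ψ N (k + 1) ≤ potential η ς κt κtan ωN Γ ψ N k := by
  have hψp : ψp k + η * (if k ∈ N then ωN k else 0) ≤ ψ k := by
    split_ifs with hN
    · linarith [hψN k hN]
    · simp [hψN' k hN]
  simp only [potential, sum_filter, sum_range_succ] at hψp ⊢
  by_cases hT : k ∈ T
  · have hstep := tangential_step_bound (B := Γ k + ς) (w := ωT k) (α := α k)
      (by linarith [hΓ k]) hη hκt hκtan (by rw [hα k, add_right_comm])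
    rw [hΓT k hT, add_right_comm (Γ k)]
    linarith [hψT k hT]
  · rw [hΓN k hT, hψT' k hT]
    linarith

end Potential

lemma div_add_le_of_potential_le {η κt κtan s r S L ψ₀ ψ₁ ψlow : ℝ} (hη : 0 < η) (hη1 : η ≤ 1)
    (hκt : 0 < κt) (hs : 0 < s) (hκts : κt * s ≤ 1) (hκtan : 0 ≤ κtan) (hS : 0 ≤ S)
    (hL : 0 ≤ L) (hlow : ψlow ≤ ψ₁)
    (h : ψ₁ + η * S + κt * η * (r - s) ≤ ψ₀ + κtan * η ^ 2 * L) :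
    r / s + S ≤ (1 + ψ₀ - ψlow) / (η * κt * s) + κtan / (κt * s) * L := by
  have hc : 0 < η * κt * s := by positivity
  rw [← mul_le_mul_iff_right₀ hc]
  have hS' : η * κt * s * S ≤ η * S := by
    nlinarith [mul_le_mul_of_nonneg_right hκts (mul_nonneg hη.le hS)]
  have hc1 : η * κt * s ≤ 1 := by nlinarith
  have hL' : κtan * η ^ 2 * L ≤ η * κtan * L := by
    nlinarith [mul_le_mul_of_nonneg_left hη1 (mul_nonneg (mul_nonneg hη.le hκtan) hL)]
  calc η * κt * s * (r / s + S) = κt * η * (r - s) + η * κt * s + η * κt * s * S := by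
        field_simp
        ring
    _ ≤ η * κt * s * ((1 + ψ₀ - ψlow) / (η * κt * s) + κtan / (κt * s) * L) := by
        rw [mul_add, mul_div_cancel₀ _ hc.ne', show η * κt * s * (κtan / (κt * s) * L)
          = η * κtan * L by field_simp]
        linarith

theorem stmt14_general
    (η ς κt κtan : ℝ)
    (hη1 : 0 < η) (hη2 : η ≤ 1) (hς1 : 0 < ς)
    (hκt1 : 0 < κt) (hκtan : 0 < κtan)
    (hκtς : κt * Real.sqrt ς ≤ 1)
    (ωT ωN : ℕ → ℝ) (hωN : ∀ k, 0 ≤ ωN k)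
    (T N : Set ℕ) [DecidablePred (· ∈ N)]
    (Γ α : ℕ → ℝ)
    (hΓ0 : Γ 0 = 0)
    (hΓT : ∀ k ∈ T, Γ (k + 1) = Γ k + ωT k ^ 2)
    (hΓN : ∀ k, k ∉ T → Γ (k + 1) = Γ k)
    (hα : ∀ k, α k = η / Real.sqrt (Γ k + ωT k ^ 2 + ς))
    (ψ ψp : ℕ → ℝ)
    (hψN : ∀ k ∈ N, ψp k - ψ k ≤ -(η * ωN k))
    (hψN' : ∀ k, k ∉ N → ψp k = ψ k)
    (hψT : ∀ k ∈ T, ψ (k + 1) - ψp k ≤ -(κt * α k * ωT k ^ 2) + κtan * α k ^ 2 * ωT k ^ 2)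
    (hψT' : ∀ k, k ∉ T → ψ (k + 1) = ψp k)
    (ψlow : ℝ) (hlow : ∀ k, ψlow ≤ ψ k)
    (κgap : ℝ) (hκgap : κgap = (1 + ψ 0 - ψlow) / (η * κt * Real.sqrt ς)) :
    ∀ k : ℕ,
      Real.sqrt (1 + Γ (k + 1) / ς)
          + ∑ ν ∈ (Finset.range (k + 1)).filter (· ∈ N), ωN ν
        ≤ κgap + (κtan / (κt * Real.sqrt ς)) * Real.log (1 + Γ (k + 1) / ς) := by
  intro k
  have hΓ := gamma_nonneg hΓ0 hΓT hΓN
  have hdecay : potential η ς κt κtan ωN Γ ψ N (k + 1) ≤ potential η ς κt κtan ωN Γ ψ N 0 :=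
    antitone_nat_of_succ_le (potential_succ_le hη1.le hς1 hκt1.le hκtan.le hΓ hΓT hΓN hα hψN
      hψN' hψT hψT') (Nat.zero_le _)
  rw [potential_zero hΓ0] at hdecay
  have hςA : ς ≤ Γ (k + 1) + ς := le_add_of_nonneg_left (hΓ (k + 1))
  have hnorm : 1 + Γ (k + 1) / ς = (Γ (k + 1) + ς) / ς := by field_simp; ring
  rw [hnorm, sqrt_div' _ hς1.le, log_div (hς1.trans_le hςA).ne' hς1.ne', hκgap]
  refine div_add_le_of_potential_le hη1 hη2 hκt1 (sqrt_pos.mpr hς1) hκtς hκtan.le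
    (sum_nonneg fun ν _ => hωN ν) (sub_nonneg.mpr (log_le_log hς1 hςA)) (hlow (k + 1)) ?_
  unfold potential at hdecay
  linarith

theorem stmt14
    (η ς β κt κtan ξ : ℝ)
    (hη1 : 0 < η) (hη2 : η ≤ 1) (hς1 : 0 < ς) (hς2 : ς ≤ 1/2) (hβ : 0 < β)
    (hκt1 : 0 < κt) (hκt2 : κt ≤ 1/2) (hκtan : 0 < κtan)
    (hξ1 : 0 < ξ) (hξ2 : ξ ≤ 1)
    (hκtς : κt * Real.sqrt ς ≤ 1)
    (ωT ωN : ℕ → ℝ) (hωT : ∀ k, 0 ≤ ωT k) (hωN : ∀ k, 0 ≤ ωN k)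
    (T N : Set ℕ) [DecidablePred (· ∈ T)] [DecidablePred (· ∈ N)]
    (Γ α : ℕ → ℝ)
    (hΓ0 : Γ 0 = 0)
    (hΓT : ∀ k ∈ T, Γ (k + 1) = Γ k + ωT k ^ 2)
    (hΓN : ∀ k, k ∉ T → Γ (k + 1) = Γ k)
    (hα : ∀ k, α k = η / Real.sqrt (Γ k + ωT k ^ 2 + ς))
    (hswitch : ∀ k, k ∈ T ↔ ωN k ≤ β * α k * ωT k)
    (hTN : ∀ k, k ∉ T → k ∈ N)
    (ψ ψp : ℕ → ℝ)
    (hψN : ∀ k ∈ N, ψp k - ψ k ≤ -(η * ωN k))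
    (hψN' : ∀ k, k ∉ N → ψp k = ψ k)
    (hψT : ∀ k ∈ T, ψ (k + 1) - ψp k ≤ -(κt * α k * ωT k ^ 2) + κtan * α k ^ 2 * ωT k ^ 2)
    (hψT' : ∀ k, k ∉ T → ψ (k + 1) = ψp k)
    (ψlow : ℝ) (hlow : ∀ k, ψlow ≤ ψ k)
    (κgap : ℝ) (hκgap : κgap = (1 + ψ 0 - ψlow) / (η * κt * Real.sqrt ς)) :
    ∀ k : ℕ,
      Real.sqrt (1 + Γ (k + 1) / ς)
          + ∑ ν ∈ (Finset.range (k + 1)).filter (· ∈ N), ωN ν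
        ≤ κgap + (κtan / (κt * Real.sqrt ς)) * Real.log (1 + Γ (k + 1) / ς) :=
  stmt14_general η ς κt κtan hη1 hη2 hς1 hκt1 hκtan hκtς ωT ωN hωN T N Γ α hΓ0 hΓT hΓN hα ψ ψp hψN
    hψN' hψT hψT' ψlow hlow κgap hκgap
end

section
/- Suppose in addition there are a sequence c̄ : ℕ → ℝ with 0 ≤ c̄(k) and ω_N(k) ≥ ξ·c̄(k) for all k, and a constant κ_ω > 0 with ω_T(k) ≤ κ_ω for all k. Then for every k ∈ ℕ: (1/(k+1))·Σ_{j=0}^{k}(ω_T(j) + c̄(j)) ≤ κ₁/√(k+1) + κ₂/(k+1), where κ₁ = (κ_T/ξ)·(1 + β·η/√ς), κ₂ = (κ_N/ξ)·(1 + √(κ_T² + κ_ω²)/(β·η)), with κ_T = 2·κ_gap·√ς + (4κ_tan/κ_t)·[log(4κ_tan/(κ_t·√ς)) − 1] and κ_N = κ_gap + (κ_tan/(κ_t·√ς))·log(1 + κ_T²/ς). In particular the average of ω_T(j) + c̄(j) over the first k+1 iterations is O(1/√(k+1)). -/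
/-
Summing the descent inequalities telescopes `ψ`. With `g = Γ + ς`, a tangential stepsize is
`α j = η / √(g (j+1)) ≥ η / √(g K)`, so the tangential decrease `Σ α ω_T²` is at least
`η Γ_K / √(Γ_K + ς)`, while the error `Σ α² ω_T² = η² Σ Δg / g(j+1)` is a right Riemann sum of
`η² ∫ dg / g`, hence at most `η² log ((Γ_K + ς) / ς)`. So `√(Γ_K + ς) - √ς` grows at most
logarithmically in `√(Γ_K + ς)`, which bounds `√(Γ_K + ς)` by `κ_T` and then the total normal
measure by `κ_N`. The average is split along the switching rule: on tangential steps
`ω_N ≤ β α ω_T ≤ (β η / √ς) ω_T` and Cauchy–Schwarz gives `Σ ω_T ≤ √(k+1) κ_T`; on normal steps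
`ω_T < ω_N √(Γ + ω_T² + ς) / (β η)`.
-/

open Finset Real

lemma sub_div_le_log_sub_log_s19 {u v : ℝ} (hu : 0 < u) (hv : 0 < v) :
    (v - u) / v ≤ log v - log u := by
  have h := one_sub_inv_le_log_of_pos (div_pos hv hu)
  rwa [log_div hv.ne' hu.ne', inv_div, one_sub_div hv.ne'] at h

lemma sum_sub_div_le_log_sub_log {g : ℕ → ℝ} (hg : ∀ j, 0 < g j) (K : ℕ) :
    ∑ j ∈ range K, (g (j + 1) - g j) / g (j + 1) ≤ log (g K) - log (g 0) := by
  rw [← sum_range_sub (fun j ↦ log (g j))]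
  exact sum_le_sum fun j _ ↦ sub_div_le_log_sub_log_s19 (hg j) (hg (j + 1))

lemma sub_div_sqrt_le_sum_sub_div_sqrt {g : ℕ → ℝ} (hg : Monotone g) (hg0 : 0 < g 0) (K : ℕ) :
    (g K - g 0) / √(g K) ≤ ∑ j ∈ range K, (g (j + 1) - g j) / √(g (j + 1)) := by
  rw [← sum_range_sub g, sum_div]
  refine sum_le_sum fun j hj ↦ div_le_div_of_nonneg_left (sub_nonneg.2 (hg j.le_succ)) ?_ ?_
  · exact sqrt_pos.2 (hg0.trans_le (hg (Nat.zero_le _)))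
  · exact sqrt_le_sqrt (hg (mem_range.1 hj))

lemma log_le_div_sub_one_add_log {y c : ℝ} (hy : 0 < y) (hc : 0 < c) :
    log y ≤ y / c - 1 + log c := by
  have h := log_le_sub_one_of_pos (div_pos hy hc)
  rw [log_div hy.ne' hc.ne'] at h
  linarith

/-- The choice `c = 2b / (a s)` in `log_le_div_sub_one_add_log` absorbs half of the linear
growth on the left. -/
lemma le_of_mul_sub_le_add_mul_log {a b s D x : ℝ} (ha : 0 < a) (hb : 0 < b) (hs : 0 < s)
    (hx : 0 < x) (h : a * (x - s) ≤ D + b * log (x / s)) :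
    x ≤ 2 * D / a + 2 * s + 2 * b / a * (log (2 * b / (a * s)) - 1) := by
  have hlog := log_le_div_sub_one_add_log (div_pos hx hs) (c := 2 * b / (a * s)) (by positivity)
  have hhalf : b * (x / s / (2 * b / (a * s))) = a * x / 2 := by
    field_simp
  have hbound : a * x / 2 ≤ D + a * s + b * (log (2 * b / (a * s)) - 1) := by
    nlinarith [mul_le_mul_of_nonneg_left hlog hb.le]
  calc x = 2 / a * (a * x / 2) := by field_simp
    _ ≤ 2 / a * (D + a * s + b * (log (2 * b / (a * s)) - 1)) := by gcongr
    _ = 2 * D / a + 2 * s + 2 * b / a * (log (2 * b / (a * s)) - 1) := by field_simp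

lemma mul_log_mul_sub_one_le {η B : ℝ} (hη0 : 0 < η) (hη1 : η ≤ 1) (hB : 0 < B) :
    η * (log (η * B) - 1) ≤ log B - 1 + 1 / B := by
  have hlogη : η * log η ≤ 0 := mul_nonpos_of_nonneg_of_nonpos hη0.le (log_nonpos hη0.le hη1)
  have hlogB : 1 - 1 / B ≤ log B := by
    simpa [one_div] using one_sub_inv_le_log_of_pos hB
  rw [log_mul hη0.ne' hB.ne']
  nlinarith [mul_nonneg (sub_nonneg.2 hη1) (by linarith : 0 ≤ log B - 1 + 1 / B),
    mul_pos hη0 (one_div_pos.2 hB)]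

lemma mul_sub_le_of_descent_le {η ς κt κtan D S y : ℝ} (hη : 0 ≤ η) (hς : 0 < ς) (hκt : 0 ≤ κt)
    (hS : 0 ≤ S) (hy : 0 ≤ y)
    (h : η * S + κt * η * (y / √(y + ς)) ≤ D + κtan * η ^ 2 * log ((y + ς) / ς)) :
    η * κt * (√(y + ς) - √ς) ≤ D + 2 * κtan * η ^ 2 * log (√(y + ς) / √ς) := by
  have hsx : √ς ≤ √(y + ς) := sqrt_le_sqrt (by linarith)
  have hx : 0 < √(y + ς) := (sqrt_pos.2 hς).trans_le hsx
  have hx2 : √(y + ς) ^ 2 = y + ς := sq_sqrt (by linarith)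
  have hs2 : √ς ^ 2 = ς := sq_sqrt hς.le
  have hlin : √(y + ς) - √ς ≤ y / √(y + ς) := by
    rw [le_div_iff₀ hx]
    nlinarith [sqrt_nonneg ς]
  have hlog : log ((y + ς) / ς) = 2 * log (√(y + ς) / √ς) := by
    have hsq : (y + ς) / ς = (√(y + ς) / √ς) ^ 2 := by rw [div_pow, hx2, hs2]
    rw [hsq, log_pow]
    push_cast
    ring
  rw [hlog] at h
  nlinarith [mul_le_mul_of_nonneg_left hlin (mul_nonneg hκt hη), mul_nonneg hη hS]

lemma sqrt_add_le_of_descent_le {η ς κt κtan D S y : ℝ} (hη0 : 0 < η) (hη1 : η ≤ 1)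
    (hς0 : 0 < ς) (hς1 : ς ≤ 1) (hκt0 : 0 < κt) (hκt1 : κt ≤ 1 / 2) (hκtan : 0 < κtan)
    (hS : 0 ≤ S) (hy : 0 ≤ y)
    (h : η * S + κt * η * (y / √(y + ς)) ≤ D + κtan * η ^ 2 * log ((y + ς) / ς)) :
    √(y + ς) ≤ 2 * ((1 + D) / (η * κt * √ς)) * √ς
      + 4 * κtan / κt * (log (4 * κtan / (κt * √ς)) - 1) := by
  have hs : 0 < √ς := sqrt_pos.2 hς0
  have hx : 0 < √(y + ς) := sqrt_pos.2 (by linarith)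
  have hx_le := le_of_mul_sub_le_add_mul_log (by positivity) (by positivity) hs hx
    (mul_sub_le_of_descent_le hη0.le hς0 hκt0.le hS hy h)
  set B := 4 * κtan / (κt * √ς) with hB_def
  have hB : 0 < B := by positivity
  have hratio : 2 * (2 * κtan * η ^ 2) / (η * κt * √ς) = η * B := by
    rw [hB_def]; field_simp; ring
  have hcoef : 2 * (2 * κtan * η ^ 2) / (η * κt) = 4 * κtan / κt * η := by
    field_simp; ring
  rw [hratio, hcoef] at hx_le
  have hηB := mul_le_mul_of_nonneg_left (mul_log_mul_sub_one_le hη0 hη1 hB)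
    (by positivity : 0 ≤ 4 * κtan / κt)
  have hBinv : 4 * κtan / κt * (1 / B) = √ς := by
    rw [hB_def]; field_simp
  have hs3 : 3 * √ς ≤ 2 / (η * κt) := by
    rw [le_div_iff₀ (by positivity)]
    nlinarith [mul_le_mul hη1 hκt1 hκt0.le zero_le_one, mul_pos hη0 hκt0, sqrt_le_one.2 hς1]
  have hsplit : 2 * ((1 + D) / (η * κt * √ς)) * √ς = 2 * D / (η * κt) + 2 / (η * κt) := by
    field_simp; ring
  rw [hsplit]
  linarith

lemma le_of_descent_le {η ς κt κtan D S y M : ℝ} (hη0 : 0 < η) (hη1 : η ≤ 1) (hς0 : 0 < ς)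
    (hκt0 : 0 < κt) (hκtan : 0 ≤ κtan) (hκtς : κt * √ς ≤ 1) (hD : 0 ≤ D) (hy : 0 ≤ y)
    (hyM : √(y + ς) ≤ M)
    (h : η * S + κt * η * (y / √(y + ς)) ≤ D + κtan * η ^ 2 * log ((y + ς) / ς)) :
    S ≤ (1 + D) / (η * κt * √ς) + κtan / (κt * √ς) * log (1 + M ^ 2 / ς) := by
  have hc : 0 < κt * √ς := mul_pos hκt0 (sqrt_pos.2 hς0)
  have hlog : log ((y + ς) / ς) ≤ log (1 + M ^ 2 / ς) := by
    refine log_le_log (by positivity) ?_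
    rw [div_le_iff₀ hς0, add_mul, div_mul_cancel₀ _ hς0.ne']
    linarith [(sqrt_le_iff.1 hyM).2]
  have hL : 0 ≤ log (1 + M ^ 2 / ς) := log_nonneg (by linarith [div_nonneg (sq_nonneg M) hς0.le])
  have hS : η * S ≤ D + κtan * η ^ 2 * log (1 + M ^ 2 / ς) := by
    have : 0 ≤ κt * η * (y / √(y + ς)) := by positivity
    nlinarith [mul_le_mul_of_nonneg_left hlog (by positivity : 0 ≤ κtan * η ^ 2)]
  have hD' : D ≤ (1 + D) / (κt * √ς) := by
    rw [le_div_iff₀ hc]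
    nlinarith
  have hη' : η ^ 2 ≤ η / (κt * √ς) := by
    rw [le_div_iff₀ hc]
    nlinarith
  rw [← mul_le_mul_iff_right₀ hη0]
  calc η * S ≤ D + κtan * η ^ 2 * log (1 + M ^ 2 / ς) := hS
    _ ≤ (1 + D) / (κt * √ς) + κtan * (η / (κt * √ς)) * log (1 + M ^ 2 / ς) := by gcongr
    _ = _ := by field_simp

lemma add_le_of_le_mul_mul {ξ β η ς α r w n c : ℝ} (hξ0 : 0 < ξ) (hξ1 : ξ ≤ 1) (hβ : 0 ≤ β)
    (hη : 0 ≤ η) (hς : 0 < ς) (hw : 0 ≤ w) (hc : ξ * c ≤ n) (hα : α = η / √r) (hςr : ς ≤ r)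
    (hn : n ≤ β * α * w) : w + c ≤ (1 + β * η / √ς) / ξ * w := by
  rw [div_mul_eq_mul_div, le_div_iff₀ hξ0]
  have hα' : α ≤ η / √ς := hα ▸ div_le_div_of_nonneg_left hη (sqrt_pos.2 hς) (sqrt_le_sqrt hςr)
  have hαw : β * α * w ≤ β * η / √ς * w := by rw [mul_div_assoc]; gcongr
  nlinarith [mul_le_of_le_one_left hw hξ1]

lemma add_le_of_mul_mul_le {ξ β η α r M w n c : ℝ} (hξ0 : 0 < ξ) (hξ1 : ξ ≤ 1)
    (hβη : 0 < β * η) (hn : 0 ≤ n) (hc : ξ * c ≤ n) (hα : α = η / √r) (hr : 0 < r)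
    (hrM : √r ≤ M) (hw : β * α * w ≤ n) :
    w + c ≤ 1 / ξ * (1 + M / (β * η)) * n := by
  have hM : 0 ≤ M := (sqrt_nonneg r).trans hrM
  have hw' : w ≤ n * M / (β * η) := by
    rw [le_div_iff₀' hβη]
    calc β * η * w = β * α * w * √r := by rw [hα]; field_simp
      _ ≤ n * M := by gcongr
  have hc' : c ≤ n / ξ := by rw [le_div_iff₀ hξ0]; linarith
  calc w + c ≤ n * M / (β * η) / ξ + n / ξ :=
        add_le_add (hw'.trans (le_div_self (by positivity) hξ0 hξ1)) hc'
    _ = 1 / ξ * (1 + M / (β * η)) * n := by field_simp; ring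

lemma sum_le_mul_sum_filter_add_mul_sum_filter_not {ι : Type*} (s : Finset ι) (p : ι → Prop)
    [DecidablePred p] {f u v : ι → ℝ} {a b : ℝ} (hp : ∀ i ∈ s, p i → f i ≤ a * u i)
    (hnp : ∀ i ∈ s, ¬p i → f i ≤ b * v i) :
    ∑ i ∈ s, f i ≤ a * ∑ i ∈ s with p i, u i + b * ∑ i ∈ s with ¬p i, v i := by
  rw [← sum_filter_add_sum_filter_not s p f, mul_sum, mul_sum]
  exact add_le_add (sum_le_sum fun i hi ↦ hp i (mem_filter.1 hi).1 (mem_filter.1 hi).2)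
    (sum_le_sum fun i hi ↦ hnp i (mem_filter.1 hi).1 (mem_filter.1 hi).2)

lemma one_div_mul_le_div_sqrt_add_div {S a b n : ℝ} (hn : 0 < n) (h : S ≤ a * √n + b) :
    1 / n * S ≤ a / √n + b / n := by
  have hsq : √n * √n = n := mul_self_sqrt hn.le
  have hs : 0 < √n := sqrt_pos.2 hn
  calc 1 / n * S ≤ 1 / n * (a * √n + b) := by gcongr
    _ = a / √n + b / n := by field_simp; linear_combination a * hsq

section Scheme

variable {ωT Γ : ℕ → ℝ} {T : Set ℕ}

lemma monotone_of_succ_eq (hΓT : ∀ k ∈ T, Γ (k + 1) = Γ k + ωT k ^ 2)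
    (hΓN : ∀ k, k ∉ T → Γ (k + 1) = Γ k) : Monotone Γ := by
  refine monotone_nat_of_le_succ fun k ↦ ?_
  by_cases hk : k ∈ T
  · rw [hΓT k hk]
    exact le_add_of_nonneg_right (sq_nonneg _)
  · rw [hΓN k hk]

lemma sum_filter_sq_eq [DecidablePred (· ∈ T)] (hΓ0 : Γ 0 = 0)
    (hΓT : ∀ k ∈ T, Γ (k + 1) = Γ k + ωT k ^ 2) (hΓN : ∀ k, k ∉ T → Γ (k + 1) = Γ k) (K : ℕ) :
    ∑ j ∈ range K with j ∈ T, ωT j ^ 2 = Γ K := by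
  have h := sum_range_sub Γ K
  rw [hΓ0, sub_zero] at h
  rw [sum_filter, ← h]
  refine sum_congr rfl fun j _ ↦ ?_
  split_ifs with hj
  · rw [hΓT j hj, add_sub_cancel_left]
  · rw [hΓN j hj, sub_self]

lemma sum_filter_le_sqrt_mul_sqrt [DecidablePred (· ∈ T)] (hΓ0 : Γ 0 = 0)
    (hΓT : ∀ k ∈ T, Γ (k + 1) = Γ k + ωT k ^ 2) (hΓN : ∀ k, k ∉ T → Γ (k + 1) = Γ k) (K : ℕ) :
    ∑ j ∈ range K with j ∈ T, ωT j ≤ √K * √(Γ K) := by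
  have h := sum_mul_le_sqrt_mul_sqrt {j ∈ range K | j ∈ T} (fun _ ↦ 1) ωT
  simp only [one_mul, one_pow, sum_const, nsmul_eq_mul, mul_one] at h
  rw [sum_filter_sq_eq hΓ0 hΓT hΓN] at h
  refine h.trans (mul_le_mul_of_nonneg_right (sqrt_le_sqrt ?_) (sqrt_nonneg _))
  exact_mod_cast (card_filter_le _ _).trans (card_range K).le

lemma sum_add_le_of_switching {η ς β ξ κω G : ℝ} {ωN cbar α : ℕ → ℝ} [DecidablePred (· ∈ T)]
    (hη : 0 < η) (hς : 0 < ς) (hβ : 0 < β) (hξ0 : 0 < ξ) (hξ1 : ξ ≤ 1) (hωT : ∀ k, 0 ≤ ωT k)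
    (hωN : ∀ k, 0 ≤ ωN k) (hcbarN : ∀ k, ξ * cbar k ≤ ωN k) (hωTb : ∀ k, ωT k ≤ κω)
    (hΓ : ∀ k, 0 ≤ Γ k) (hΓG : ∀ k, √(Γ k + ς) ≤ G) (hα : ∀ k, α k = η / √(Γ k + ωT k ^ 2 + ς))
    (hswitch : ∀ k, k ∈ T ↔ ωN k ≤ β * α k * ωT k) (K : ℕ) :
    ∑ j ∈ range K, (ωT j + cbar j)
      ≤ (1 + β * η / √ς) / ξ * ∑ j ∈ range K with j ∈ T, ωT j
        + 1 / ξ * (1 + √(G ^ 2 + κω ^ 2) / (β * η)) * ∑ j ∈ range K with j ∉ T, ωN j := by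
  have hςr : ∀ j, ς ≤ Γ j + ωT j ^ 2 + ς := fun j ↦ by linarith [hΓ j, sq_nonneg (ωT j)]
  have hbox : ∀ j, Γ j + ωT j ^ 2 + ς ≤ G ^ 2 + κω ^ 2 := fun j ↦ by
    linarith [(sqrt_le_iff.1 (hΓG j)).2, pow_le_pow_left₀ (hωT j) (hωTb j) 2]
  refine sum_le_mul_sum_filter_add_mul_sum_filter_not _ _ (fun j _ hj ↦ ?_) (fun j _ hj ↦ ?_)
  · exact add_le_of_le_mul_mul hξ0 hξ1 hβ.le hη.le hς (hωT j) (hcbarN j) (hα j) (hςr j)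
      ((hswitch j).1 hj)
  · exact add_le_of_mul_mul_le hξ0 hξ1 (mul_pos hβ hη) (hωN j) (hcbarN j) (hα j)
      (hς.trans_le (hςr j)) (sqrt_le_sqrt (hbox j)) (not_le.1 ((hswitch j).not.1 hj)).le

end Scheme

section Descent

variable {η κt κtan ς ψlow : ℝ} {ωT ωN Γ α ψ ψp : ℕ → ℝ} {T N : Set ℕ} [DecidablePred (· ∈ N)]

lemma descent_step_le (hς : 0 < ς) (hΓT : ∀ k ∈ T, Γ (k + 1) = Γ k + ωT k ^ 2)
    (hΓN : ∀ k, k ∉ T → Γ (k + 1) = Γ k) (hα : ∀ k, α k = η / √(Γ k + ωT k ^ 2 + ς))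
    (hψN : ∀ k ∈ N, ψp k - ψ k ≤ -(η * ωN k)) (hψN' : ∀ k, k ∉ N → ψp k = ψ k)
    (hψT : ∀ k ∈ T, ψ (k + 1) - ψp k ≤ -(κt * α k * ωT k ^ 2) + κtan * α k ^ 2 * ωT k ^ 2)
    (hψT' : ∀ k, k ∉ T → ψ (k + 1) = ψp k) {j : ℕ} (hΓj : 0 ≤ Γ j) :
    ψ (j + 1) - ψ j + η * (if j ∈ N then ωN j else 0)
      ≤ -(κt * η * ((Γ (j + 1) - Γ j) / √(Γ (j + 1) + ς)))
        + κtan * η ^ 2 * ((Γ (j + 1) - Γ j) / (Γ (j + 1) + ς)) := by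
  have hnormal : ψp j - ψ j + η * (if j ∈ N then ωN j else 0) ≤ 0 := by
    split_ifs with hj
    · linarith [hψN j hj]
    · simp [hψN' j hj]
  have htangential : ψ (j + 1) - ψp j ≤ -(κt * η * ((Γ (j + 1) - Γ j) / √(Γ (j + 1) + ς)))
      + κtan * η ^ 2 * ((Γ (j + 1) - Γ j) / (Γ (j + 1) + ς)) := by
    by_cases hj : j ∈ T
    · have hsucc := hΓT j hj
      have hα2 : α j ^ 2 = η ^ 2 / (Γ (j + 1) + ς) := by
        rw [hα, div_pow, sq_sqrt (by positivity), hsucc]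
      convert hψT j hj using 2
      · rw [hα, hsucc]; ring
      · rw [hα2, hsucc]; ring
    · simp [hψT' j hj, hΓN j hj]
  linarith

lemma descent_le (hη : 0 ≤ η) (hκt : 0 ≤ κt) (hκtan : 0 ≤ κtan) (hς : 0 < ς) (hΓ0 : Γ 0 = 0)
    (hΓT : ∀ k ∈ T, Γ (k + 1) = Γ k + ωT k ^ 2)
    (hΓN : ∀ k, k ∉ T → Γ (k + 1) = Γ k) (hα : ∀ k, α k = η / √(Γ k + ωT k ^ 2 + ς))
    (hψN : ∀ k ∈ N, ψp k - ψ k ≤ -(η * ωN k)) (hψN' : ∀ k, k ∉ N → ψp k = ψ k)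
    (hψT : ∀ k ∈ T, ψ (k + 1) - ψp k ≤ -(κt * α k * ωT k ^ 2) + κtan * α k ^ 2 * ωT k ^ 2)
    (hψT' : ∀ k, k ∉ T → ψ (k + 1) = ψp k) {K : ℕ} (hlow : ψlow ≤ ψ K) :
    η * ∑ j ∈ range K with j ∈ N, ωN j + κt * η * (Γ K / √(Γ K + ς))
      ≤ ψ 0 - ψlow + κtan * η ^ 2 * log ((Γ K + ς) / ς) := by
  have hΓmono : Monotone Γ := monotone_of_succ_eq hΓT hΓN
  have hΓnn : ∀ j, 0 ≤ Γ j := fun j ↦ hΓ0 ▸ hΓmono j.zero_le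
  have hg : ∀ j, 0 < Γ j + ς := fun j ↦ add_pos_of_nonneg_of_pos (hΓnn j) hς
  have hsqrt := sub_div_sqrt_le_sum_sub_div_sqrt (g := fun j ↦ Γ j + ς)
    (fun _ _ hij ↦ add_le_add_left (hΓmono hij) ς) (hg 0) K
  have hlog := sum_sub_div_le_log_sub_log (g := fun j ↦ Γ j + ς) hg K
  simp only [add_sub_add_right_eq_sub, hΓ0, zero_add, add_sub_cancel_right] at hsqrt hlog
  rw [← log_div (hg K).ne' hς.ne'] at hlog
  have htelescope : ψ K - ψ 0 + η * ∑ j ∈ range K with j ∈ N, ωN j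
      ≤ -(κt * η * ∑ j ∈ range K, (Γ (j + 1) - Γ j) / √(Γ (j + 1) + ς))
        + κtan * η ^ 2 * ∑ j ∈ range K, (Γ (j + 1) - Γ j) / (Γ (j + 1) + ς) := by
    rw [sum_filter, mul_sum, mul_sum, mul_sum, ← sum_range_sub ψ, ← sum_add_distrib,
      ← sum_neg_distrib, ← sum_add_distrib]
    exact sum_le_sum fun j _ ↦ descent_step_le hς hΓT hΓN hα hψN hψN' hψT hψT' (hΓnn j)
  nlinarith [mul_le_mul_of_nonneg_left hsqrt (mul_nonneg hκt hη),
    mul_le_mul_of_nonneg_left hlog (mul_nonneg hκtan (sq_nonneg η))]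

end Descent

theorem stmt19_general
    (η ς β κt κtan ξ : ℝ)
    (hη1 : 0 < η) (hη2 : η ≤ 1) (hς1 : 0 < ς) (hς2 : ς ≤ 1/2) (hβ : 0 < β)
    (hκt1 : 0 < κt) (hκt2 : κt ≤ 1/2) (hκtan : 0 < κtan)
    (hξ1 : 0 < ξ) (hξ2 : ξ ≤ 1)
    (hκtς : κt * Real.sqrt ς ≤ 1)
    (ωT ωN : ℕ → ℝ) (hωT : ∀ k, 0 ≤ ωT k) (hωN : ∀ k, 0 ≤ ωN k)
    (T N : Set ℕ) [DecidablePred (· ∈ T)] [DecidablePred (· ∈ N)]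
    (Γ α : ℕ → ℝ)
    (hΓ0 : Γ 0 = 0)
    (hΓT : ∀ k ∈ T, Γ (k + 1) = Γ k + ωT k ^ 2)
    (hΓN : ∀ k, k ∉ T → Γ (k + 1) = Γ k)
    (hα : ∀ k, α k = η / Real.sqrt (Γ k + ωT k ^ 2 + ς))
    (hswitch : ∀ k, k ∈ T ↔ ωN k ≤ β * α k * ωT k)
    (hTN : ∀ k, k ∉ T → k ∈ N)
    (ψ ψp : ℕ → ℝ)
    (hψN : ∀ k ∈ N, ψp k - ψ k ≤ -(η * ωN k))
    (hψN' : ∀ k, k ∉ N → ψp k = ψ k)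
    (hψT : ∀ k ∈ T, ψ (k + 1) - ψp k ≤ -(κt * α k * ωT k ^ 2) + κtan * α k ^ 2 * ωT k ^ 2)
    (hψT' : ∀ k, k ∉ T → ψ (k + 1) = ψp k)
    (ψlow : ℝ) (hlow : ∀ k, ψlow ≤ ψ k)
    (κgap : ℝ) (hκgap : κgap = (1 + ψ 0 - ψlow) / (η * κt * Real.sqrt ς))
    (cbar : ℕ → ℝ) (hcbarN : ∀ k, ξ * cbar k ≤ ωN k)
    (κω : ℝ) (hωTb : ∀ k, ωT k ≤ κω)
    (κT κN κ₁ κ₂ : ℝ)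
    (hκT : κT = 2 * κgap * Real.sqrt ς
      + (4 * κtan / κt) * (Real.log (4 * κtan / (κt * Real.sqrt ς)) - 1))
    (hκN : κN = κgap + (κtan / (κt * Real.sqrt ς)) * Real.log (1 + κT ^ 2 / ς))
    (hκ₁ : κ₁ = (κT / ξ) * (1 + β * η / Real.sqrt ς))
    (hκ₂ : κ₂ = (κN / ξ) * (1 + Real.sqrt (κT ^ 2 + κω ^ 2) / (β * η))) :
    ∀ k : ℕ,
      (1 / ((k : ℝ) + 1)) * ∑ j ∈ Finset.range (k + 1), (ωT j + cbar j)
        ≤ κ₁ / Real.sqrt ((k : ℝ) + 1) + κ₂ / ((k : ℝ) + 1) := by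
  intro k
  rw [add_sub_assoc] at hκgap
  subst hκgap
  have hΓnn : ∀ K, 0 ≤ Γ K := fun K ↦ hΓ0 ▸ monotone_of_succ_eq hΓT hΓN K.zero_le
  have hdescent : ∀ K, η * ∑ j ∈ range K with j ∈ N, ωN j + κt * η * (Γ K / √(Γ K + ς))
      ≤ ψ 0 - ψlow + κtan * η ^ 2 * log ((Γ K + ς) / ς) := fun K ↦
    descent_le hη1.le hκt1.le hκtan.le hς1 hΓ0 hΓT hΓN hα hψN hψN' hψT hψT' (hlow K)
  have hgrowth : ∀ K, √(Γ K + ς) ≤ κT := fun K ↦ hκT ▸ sqrt_add_le_of_descent_le hη1 hη2 hς1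
    (by linarith) hκt1 hκt2 hκtan (sum_nonneg fun j _ ↦ hωN j) (hΓnn K) (hdescent K)
  have hnormal : ∑ j ∈ range (k + 1) with j ∉ T, ωN j ≤ κN := by
    refine (sum_le_sum_of_subset_of_nonneg (monotone_filter_right _ fun j _ ↦ hTN j)
      fun j _ _ ↦ hωN j).trans (hκN ▸ ?_)
    exact le_of_descent_le hη1 hη2 hς1 hκt1 hκtan.le hκtς (sub_nonneg.2 (hlow 0)) (hΓnn _)
      (hgrowth _) (hdescent _)
  have htangential : ∑ j ∈ range (k + 1) with j ∈ T, ωT j ≤ √((k : ℝ) + 1) * κT := by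
    refine (sum_filter_le_sqrt_mul_sqrt hΓ0 hΓT hΓN (k + 1)).trans ?_
    push_cast
    exact mul_le_mul_of_nonneg_left
      ((sqrt_le_sqrt (le_add_of_nonneg_right hς1.le)).trans (hgrowth _)) (sqrt_nonneg _)
  refine one_div_mul_le_div_sqrt_add_div (by positivity) ?_
  calc ∑ j ∈ range (k + 1), (ωT j + cbar j)
      ≤ (1 + β * η / √ς) / ξ * (√((k : ℝ) + 1) * κT)
        + 1 / ξ * (1 + √(κT ^ 2 + κω ^ 2) / (β * η)) * κN := by
        refine (sum_add_le_of_switching hη1 hς1 hβ hξ1 hξ2 hωT hωN hcbarN hωTb hΓnn hgrowth hα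
          hswitch (k + 1)).trans ?_
        gcongr
    _ = κ₁ * √((k : ℝ) + 1) + κ₂ := by rw [hκ₁, hκ₂]; ring

theorem stmt19
    (η ς β κt κtan ξ : ℝ)
    (hη1 : 0 < η) (hη2 : η ≤ 1) (hς1 : 0 < ς) (hς2 : ς ≤ 1/2) (hβ : 0 < β)
    (hκt1 : 0 < κt) (hκt2 : κt ≤ 1/2) (hκtan : 0 < κtan)
    (hξ1 : 0 < ξ) (hξ2 : ξ ≤ 1)
    (hκtς : κt * Real.sqrt ς ≤ 1)
    (ωT ωN : ℕ → ℝ) (hωT : ∀ k, 0 ≤ ωT k) (hωN : ∀ k, 0 ≤ ωN k)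
    (T N : Set ℕ) [DecidablePred (· ∈ T)] [DecidablePred (· ∈ N)]
    (Γ α : ℕ → ℝ)
    (hΓ0 : Γ 0 = 0)
    (hΓT : ∀ k ∈ T, Γ (k + 1) = Γ k + ωT k ^ 2)
    (hΓN : ∀ k, k ∉ T → Γ (k + 1) = Γ k)
    (hα : ∀ k, α k = η / Real.sqrt (Γ k + ωT k ^ 2 + ς))
    (hswitch : ∀ k, k ∈ T ↔ ωN k ≤ β * α k * ωT k)
    (hTN : ∀ k, k ∉ T → k ∈ N)
    (ψ ψp : ℕ → ℝ)
    (hψN : ∀ k ∈ N, ψp k - ψ k ≤ -(η * ωN k))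
    (hψN' : ∀ k, k ∉ N → ψp k = ψ k)
    (hψT : ∀ k ∈ T, ψ (k + 1) - ψp k ≤ -(κt * α k * ωT k ^ 2) + κtan * α k ^ 2 * ωT k ^ 2)
    (hψT' : ∀ k, k ∉ T → ψ (k + 1) = ψp k)
    (ψlow : ℝ) (hlow : ∀ k, ψlow ≤ ψ k)
    (κgap : ℝ) (hκgap : κgap = (1 + ψ 0 - ψlow) / (η * κt * Real.sqrt ς))
    (cbar : ℕ → ℝ) (hcbar : ∀ k, 0 ≤ cbar k) (hcbarN : ∀ k, ξ * cbar k ≤ ωN k)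
    (κω : ℝ) (hκω : 0 < κω) (hωTb : ∀ k, ωT k ≤ κω)
    (κT κN κ₁ κ₂ : ℝ)
    (hκT : κT = 2 * κgap * Real.sqrt ς
      + (4 * κtan / κt) * (Real.log (4 * κtan / (κt * Real.sqrt ς)) - 1))
    (hκN : κN = κgap + (κtan / (κt * Real.sqrt ς)) * Real.log (1 + κT ^ 2 / ς))
    (hκ₁ : κ₁ = (κT / ξ) * (1 + β * η / Real.sqrt ς))
    (hκ₂ : κ₂ = (κN / ξ) * (1 + Real.sqrt (κT ^ 2 + κω ^ 2) / (β * η))) :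
    ∀ k : ℕ,
      (1 / ((k : ℝ) + 1)) * ∑ j ∈ Finset.range (k + 1), (ωT j + cbar j)
        ≤ κ₁ / Real.sqrt ((k : ℝ) + 1) + κ₂ / ((k : ℝ) + 1) :=
  stmt19_general η ς β κt κtan ξ hη1 hη2 hς1 hς2 hβ hκt1 hκt2 hκtan hξ1 hξ2 hκtς ωT ωN hωT hωN T N Γ
    α hΓ0 hΓT hΓN hα hswitch hTN ψ ψp hψN hψN' hψT hψT' ψlow hlow κgap hκgap cbar hcbarN κω hωTb κT
    κN κ₁ κ₂ hκT hκN hκ₁ hκ₂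
end
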